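/- Let φ : [0,2] → ℝ be twice continuously differentiable and let k ∈ (0,2) be such that φ''(t) < 0 for t ∈ [0,k) and φ''(t) > 0 for t ∈ (k,2]. Let β ∈ (0,1) satisfy φ(2β) − φ(β) = β·φ'(β). Define Γ(x) = β − x for x ∈ [0,β) and Γ(x) = x for x ∈ [β,1], and define f : [0,1] → ℝ by f(x) = x·φ'(β) for x ∈ [0,β) and f(x) = (1/2)(φ(2x) − φ(2β)) + β·φ'(β) for x ∈ [β,1]. Then for all x, ξ ∈ [0,1], φ(ξ + Γ(x)) − φ(x + Γ(x)) ≤ f(ξ) − f(x). -/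

import Mathlib

/-!
Let `G t = φ t - φ β - (t - β) φ' β` be the gap between `φ` and its tangent at `β`; then
`G β = 0`, and `G (2β) = 0` by the choice of `β`. Rolle gives `c ∈ (β, 2β)` with `φ' c = φ' β`,
and since `φ'` decreases on `[0, k]` and increases on `[k, 2]` this forces `β < k < c`. So `G`
increases on `[0, β]`, decreases on `[β, c]` and increases on `[c, 2]`: it is `≤ 0` on `[0, 2β]`,
and monotone and convex on `[2β, 2] ⊆ [k, 2]`. Subtracting the tangent line from both sides turns
the inequality into one about `G` alone, which follows from midpoint convexity of `G` on `[2β, 2]`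
and from `G (y + s) ≤ G (y + β) ≤ G (2y) / 2` for `y ∈ [β, 1]`, `s ∈ [0, β]`.
-/

open Set

lemma strictMonoOn_Icc_of_hasDerivWithinAt_pos {f f' : ℝ → ℝ} {s : Set ℝ} {a b : ℝ}
    (hs : Icc a b ⊆ s) (hf : ∀ t ∈ Icc a b, HasDerivWithinAt f (f' t) s t)
    (hf' : ∀ t ∈ Ioo a b, 0 < f' t) : StrictMonoOn f (Icc a b) := by
  refine strictMonoOn_of_hasDerivWithinAt_pos (convex_Icc a b)
    (fun t ht => (hf t ht).continuousWithinAt.mono hs) ?_ (by rwa [interior_Icc])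
  rw [interior_Icc]
  exact fun t ht => (hf t (Ioo_subset_Icc_self ht)).mono (Ioo_subset_Icc_self.trans hs)

lemma strictAntiOn_Icc_of_hasDerivWithinAt_neg {f f' : ℝ → ℝ} {s : Set ℝ} {a b : ℝ}
    (hs : Icc a b ⊆ s) (hf : ∀ t ∈ Icc a b, HasDerivWithinAt f (f' t) s t)
    (hf' : ∀ t ∈ Ioo a b, f' t < 0) : StrictAntiOn f (Icc a b) := by
  refine strictAntiOn_of_hasDerivWithinAt_neg (convex_Icc a b)
    (fun t ht => (hf t ht).continuousWithinAt.mono hs) ?_ (by rwa [interior_Icc])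
  rw [interior_Icc]
  exact fun t ht => (hf t (Ioo_subset_Icc_self ht)).mono (Ioo_subset_Icc_self.trans hs)

lemma ConvexOn.map_add_div_two_le {s : Set ℝ} {g : ℝ → ℝ} (hg : ConvexOn ℝ s g) {x y : ℝ}
    (hx : x ∈ s) (hy : y ∈ s) : g ((x + y) / 2) ≤ (g x + g y) / 2 := by
  have := hg.2 hx hy (by norm_num : (0 : ℝ) ≤ 1 / 2) (by norm_num : (0 : ℝ) ≤ 1 / 2) (by norm_num)
  simp only [smul_eq_mul] at this
  rw [show (x + y) / 2 = 1 / 2 * x + 1 / 2 * y by ring]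
  linarith

lemma le_half_of_monotoneOn_of_convexOn {g : ℝ → ℝ} {β b x s : ℝ}
    (hle : ∀ t ∈ Icc β (2 * β), g t ≤ 0) (h2β : g (2 * β) = 0)
    (hmono : MonotoneOn g (Icc (2 * β) b)) (hconv : ConvexOn ℝ (Icc (2 * β) b) g)
    (hβx : β ≤ x) (hxb : 2 * x ≤ b) (hs : s ∈ Icc 0 β) : g (x + s) ≤ g (2 * x) / 2 := by
  obtain ⟨hs₀, hs₁⟩ := hs
  have h2x : 2 * x ∈ Icc (2 * β) b := ⟨by linarith, hxb⟩
  have hg2x : 0 ≤ g (2 * x) := h2β ▸ hmono ⟨le_rfl, by linarith⟩ h2x h2x.1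
  rcases le_or_gt (x + s) (2 * β) with h | h
  · linarith [hle (x + s) ⟨by linarith, h⟩]
  · calc g (x + s) ≤ g ((2 * β + 2 * x) / 2) :=
          hmono ⟨h.le, by linarith⟩ ⟨by linarith, by linarith⟩ (by linarith)
      _ ≤ (g (2 * β) + g (2 * x)) / 2 := hconv.map_add_div_two_le ⟨le_rfl, by linarith⟩ h2x
      _ = g (2 * x) / 2 := by rw [h2β, zero_add]

lemma mem_Ioo_of_strictAntiOn_of_strictMonoOn {u : ℝ → ℝ} {a b k β c : ℝ}
    (hanti : StrictAntiOn u (Icc a k)) (hmono : StrictMonoOn u (Icc k b))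
    (hβ : a ≤ β) (hβc : β < c) (hc : c ≤ b) (heq : u c = u β) : k ∈ Ioo β c := by
  constructor
  · by_contra! h
    exact (hmono ⟨h, by linarith⟩ ⟨by linarith, hc⟩ hβc).ne' heq
  · by_contra! h
    exact (hanti ⟨hβ, by linarith⟩ ⟨by linarith, h⟩ hβc).ne heq

def tangentGap (φ φ' : ℝ → ℝ) (β t : ℝ) : ℝ := φ t - φ β - (t - β) * φ' β

section TangentGap

variable {φ φ' : ℝ → ℝ} {β : ℝ}

lemma tangentGap_self : tangentGap φ φ' β β = 0 := by
  simp [tangentGap]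

lemma tangentGap_two_mul (hβ : φ (2 * β) - φ β = β * φ' β) : tangentGap φ φ' β (2 * β) = 0 := by
  unfold tangentGap
  linarith

lemma HasDerivWithinAt.tangentGap {s : Set ℝ} {t : ℝ} (h : HasDerivWithinAt φ (φ' t) s t) :
    HasDerivWithinAt (tangentGap φ φ' β) (φ' t - φ' β) s t := by
  have := (h.sub_const (φ β)).sub (((hasDerivWithinAt_id t s).sub_const β).mul_const (φ' β))
  rwa [one_mul] at this

variable {k c : ℝ}

lemma exists_mem_Ioo_two_mul_deriv_eq
    (hd : ∀ t ∈ Icc (0 : ℝ) 2, HasDerivWithinAt φ (φ' t) (Icc 0 2) t) (hβ : β ∈ Ioo (0 : ℝ) 1)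
    (hβeq : φ (2 * β) - φ β = β * φ' β) : ∃ c ∈ Ioo β (2 * β), φ' c = φ' β := by
  obtain ⟨hβ₀, hβ₁⟩ := hβ
  have hsub : Icc β (2 * β) ⊆ Icc 0 2 := Icc_subset_Icc hβ₀.le (by linarith)
  obtain ⟨c, hc, hc'⟩ := exists_hasDerivAt_eq_zero (by linarith : β < 2 * β)
    (fun t ht => ((hd t (hsub ht)).tangentGap (β := β)).continuousWithinAt.mono hsub)
    (tangentGap_self.trans (tangentGap_two_mul hβeq).symm)
    (fun t ht => ((hd t (hsub (Ioo_subset_Icc_self ht))).tangentGap).hasDerivAt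
      (Icc_mem_nhds (by linarith [ht.1]) (by linarith [ht.2])))
  exact ⟨c, hc, sub_eq_zero.mp hc'⟩

lemma strictMonoOn_tangentGap_left
    (hd : ∀ t ∈ Icc (0 : ℝ) 2, HasDerivWithinAt φ (φ' t) (Icc 0 2) t)
    (hanti : StrictAntiOn φ' (Icc 0 k)) (hβk : β < k) (hk : k ≤ 2) :
    StrictMonoOn (tangentGap φ φ' β) (Icc 0 β) :=
  strictMonoOn_Icc_of_hasDerivWithinAt_pos (Icc_subset_Icc le_rfl (by linarith))
    (fun t ht => (hd t ⟨ht.1, by linarith [ht.2]⟩).tangentGap)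
    (fun t ht => sub_pos.mpr <|
      hanti (a := t) ⟨ht.1.le, by linarith [ht.2]⟩ ⟨by linarith [ht.1, ht.2], hβk.le⟩ ht.2)

lemma strictAntiOn_tangentGap
    (hd : ∀ t ∈ Icc (0 : ℝ) 2, HasDerivWithinAt φ (φ' t) (Icc 0 2) t)
    (hanti : StrictAntiOn φ' (Icc 0 k)) (hmono : StrictMonoOn φ' (Icc k 2)) (hβ : 0 ≤ β)
    (hk : k ∈ Ioo β c) (hc : c ≤ 2) (hφ'c : φ' c = φ' β) :
    StrictAntiOn (tangentGap φ φ' β) (Icc β c) := by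
  obtain ⟨hβk, hkc⟩ := hk
  refine strictAntiOn_Icc_of_hasDerivWithinAt_neg (Icc_subset_Icc hβ hc)
    (fun t ht => (hd t ⟨by linarith [ht.1], by linarith [ht.2]⟩).tangentGap)
    (fun t ht => sub_neg.mpr ?_)
  rcases le_or_gt t k with htk | hkt
  · exact hanti ⟨hβ, hβk.le⟩ ⟨by linarith [ht.1], htk⟩ ht.1
  · exact hφ'c ▸ hmono ⟨hkt.le, by linarith [ht.2]⟩ ⟨hkc.le, hc⟩ ht.2

lemma strictMonoOn_tangentGap_right
    (hd : ∀ t ∈ Icc (0 : ℝ) 2, HasDerivWithinAt φ (φ' t) (Icc 0 2) t)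
    (hmono : StrictMonoOn φ' (Icc k 2)) (hk : 0 ≤ k) (hkc : k < c) (hφ'c : φ' c = φ' β) :
    StrictMonoOn (tangentGap φ φ' β) (Icc c 2) :=
  strictMonoOn_Icc_of_hasDerivWithinAt_pos (Icc_subset_Icc (by linarith) le_rfl)
    (fun t ht => (hd t ⟨by linarith [ht.1], ht.2⟩).tangentGap)
    (fun t ht => sub_pos.mpr <|
      hφ'c ▸ hmono (a := c) ⟨hkc.le, by linarith [ht.1, ht.2]⟩ ⟨by linarith [ht.1], ht.2.le⟩ ht.1)

lemma tangentGap_nonpos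
    (hd : ∀ t ∈ Icc (0 : ℝ) 2, HasDerivWithinAt φ (φ' t) (Icc 0 2) t)
    (hanti : StrictAntiOn φ' (Icc 0 k)) (hmono : StrictMonoOn φ' (Icc k 2))
    (hβ : β ∈ Icc (0 : ℝ) 1) (hk : k ∈ Ioo β c) (hc : c ≤ 2 * β) (hφ'c : φ' c = φ' β)
    (hβeq : φ (2 * β) - φ β = β * φ' β) :
    ∀ t ∈ Icc 0 (2 * β), tangentGap φ φ' β t ≤ 0 := by
  obtain ⟨hβ₀, hβ₁⟩ := hβ
  rintro t ⟨ht₀, ht₁⟩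
  rcases le_or_gt t β with htβ | hβt
  · exact ((strictMonoOn_tangentGap_left hd hanti hk.1 (by linarith [hk.2])).monotoneOn
      ⟨ht₀, htβ⟩ ⟨hβ₀, le_rfl⟩ htβ).trans_eq tangentGap_self
  rcases le_or_gt t c with htc | hct
  · exact ((strictAntiOn_tangentGap hd hanti hmono hβ₀ hk (by linarith) hφ'c).antitoneOn
      ⟨le_rfl, by linarith [hk.1, hk.2]⟩ ⟨hβt.le, htc⟩ hβt.le).trans_eq tangentGap_self
  · exact ((strictMonoOn_tangentGap_right hd hmono (by linarith [hk.1]) hk.2 hφ'c).monotoneOn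
      ⟨hct.le, by linarith⟩ ⟨hc, by linarith⟩ ht₁).trans_eq (tangentGap_two_mul hβeq)

lemma convexOn_tangentGap
    (hd : ∀ t ∈ Icc (0 : ℝ) 2, HasDerivWithinAt φ (φ' t) (Icc 0 2) t) {φ'' : ℝ → ℝ}
    (hd' : ∀ t ∈ Icc (0 : ℝ) 2, HasDerivWithinAt φ' (φ'' t) (Icc 0 2) t)
    (hconv : ∀ t ∈ Ioc k 2, 0 < φ'' t) (hk : 0 ≤ k) :
    ConvexOn ℝ (Icc k 2) (tangentGap φ φ' β) := by
  have hsub : Icc k 2 ⊆ Icc 0 2 := Icc_subset_Icc hk le_rfl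
  refine convexOn_of_hasDerivWithinAt2_nonneg (f' := fun t => φ' t - φ' β) (f'' := φ'')
    (convex_Icc k 2) (fun t ht => (hd t (hsub ht)).tangentGap.continuousWithinAt.mono hsub)
    ?_ ?_ ?_
  all_goals rw [interior_Icc]
  · exact fun t ht => (hd t (hsub (Ioo_subset_Icc_self ht))).tangentGap.mono
      (Ioo_subset_Icc_self.trans hsub)
  · exact fun t ht => ((hd' t (hsub (Ioo_subset_Icc_self ht))).sub_const (φ' β)).mono
      (Ioo_subset_Icc_self.trans hsub)
  · exact fun t ht => (hconv t ⟨ht.1, ht.2.le⟩).le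

lemma sub_le_sub_of_tangentGap {Γ f : ℝ → ℝ} (hβ : 0 ≤ β)
    (hβeq : φ (2 * β) - φ β = β * φ' β)
    (hΓ1 : ∀ x, 0 ≤ x → x < β → Γ x = β - x)
    (hΓ2 : ∀ x, β ≤ x → x ≤ 1 → Γ x = x)
    (hf1 : ∀ x, 0 ≤ x → x < β → f x = x * φ' β)
    (hf2 : ∀ x, β ≤ x → x ≤ 1 → f x = (1 / 2) * (φ (2 * x) - φ (2 * β)) + β * φ' β)
    (hle : ∀ t ∈ Icc 0 (2 * β), tangentGap φ φ' β t ≤ 0)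
    (hmono : MonotoneOn (tangentGap φ φ' β) (Icc (2 * β) 2))
    (hconv : ConvexOn ℝ (Icc (2 * β) 2) (tangentGap φ φ' β)) :
    ∀ x ∈ Icc (0:ℝ) 1, ∀ ξ ∈ Icc (0:ℝ) 1, φ (ξ + Γ x) - φ (x + Γ x) ≤ f ξ - f x := by
  have half : ∀ y ∈ Icc β 1, ∀ s ∈ Icc 0 β,
      tangentGap φ φ' β (y + s) ≤ tangentGap φ φ' β (2 * y) / 2 :=
    fun y hy s hs => le_half_of_monotoneOn_of_convexOn
      (fun t ht => hle t ⟨by linarith [ht.1], ht.2⟩) (tangentGap_two_mul hβeq) hmono hconv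
      hy.1 (by linarith [hy.2]) hs
  rintro x ⟨hx₀, hx₁⟩ ξ ⟨hξ₀, hξ₁⟩
  rcases lt_or_ge x β with hxβ | hβx <;> rcases lt_or_ge ξ β with hξβ | hβξ
  · have := hle (ξ + (β - x)) ⟨by linarith, by linarith⟩
    rw [hΓ1 x hx₀ hxβ, hf1 x hx₀ hxβ, hf1 ξ hξ₀ hξβ, add_sub_cancel]
    unfold tangentGap at this
    linarith
  · have := half ξ ⟨hβξ, hξ₁⟩ (β - x) ⟨by linarith, by linarith⟩
    rw [hΓ1 x hx₀ hxβ, hf1 x hx₀ hxβ, hf2 ξ hβξ hξ₁, add_sub_cancel]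
    unfold tangentGap at this
    linarith
  · have := half x ⟨hβx, hx₁⟩ ξ ⟨hξ₀, hξβ.le⟩
    rw [hΓ2 x hβx hx₁, hf2 x hβx hx₁, hf1 ξ hξ₀ hξβ, add_comm ξ, ← two_mul]
    unfold tangentGap at this
    linarith
  · have := hconv.map_add_div_two_le (x := 2 * x) (y := 2 * ξ)
      ⟨by linarith, by linarith⟩ ⟨by linarith, by linarith⟩
    rw [hΓ2 x hβx hx₁, hf2 x hβx hx₁, hf2 ξ hβξ hξ₁, ← two_mul,
      show ξ + x = (2 * x + 2 * ξ) / 2 by ring]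
    unfold tangentGap at this
    linarith

end TangentGap

theorem stmt16_general (φ φ' φ'' : ℝ → ℝ)
    (hd1 : ∀ t ∈ Icc (0:ℝ) 2, HasDerivWithinAt φ (φ' t) (Icc 0 2) t)
    (hd2 : ∀ t ∈ Icc (0:ℝ) 2, HasDerivWithinAt φ' (φ'' t) (Icc 0 2) t)
    (k : ℝ) (hk : k ∈ Ioo (0:ℝ) 2)
    (hconc : ∀ t ∈ Ico (0:ℝ) k, φ'' t < 0)
    (hconv : ∀ t ∈ Ioc k 2, 0 < φ'' t)
    (β : ℝ) (hβ : β ∈ Ioo (0:ℝ) 1)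
    (hβeq : φ (2 * β) - φ β = β * φ' β)
    (Γ f : ℝ → ℝ)
    (hΓ1 : ∀ x, 0 ≤ x → x < β → Γ x = β - x)
    (hΓ2 : ∀ x, β ≤ x → x ≤ 1 → Γ x = x)
    (hf1 : ∀ x, 0 ≤ x → x < β → f x = x * φ' β)
    (hf2 : ∀ x, β ≤ x → x ≤ 1 → f x = (1 / 2) * (φ (2 * x) - φ (2 * β)) + β * φ' β)
    : ∀ x ∈ Icc (0:ℝ) 1, ∀ ξ ∈ Icc (0:ℝ) 1,
      φ (ξ + Γ x) - φ (x + Γ x) ≤ f ξ - f x := by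
  obtain ⟨hβ₀, hβ₁⟩ := hβ
  obtain ⟨hk₀, hk₂⟩ := hk
  have hanti : StrictAntiOn φ' (Icc 0 k) :=
    strictAntiOn_Icc_of_hasDerivWithinAt_neg (Icc_subset_Icc le_rfl hk₂.le)
      (fun t ht => hd2 t ⟨ht.1, ht.2.trans hk₂.le⟩) (fun t ht => hconc t ⟨ht.1.le, ht.2⟩)
  have hmono : StrictMonoOn φ' (Icc k 2) :=
    strictMonoOn_Icc_of_hasDerivWithinAt_pos (Icc_subset_Icc hk₀.le le_rfl)
      (fun t ht => hd2 t ⟨hk₀.le.trans ht.1, ht.2⟩) (fun t ht => hconv t ⟨ht.1, ht.2.le⟩)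
  obtain ⟨c, ⟨hβc, hc2β⟩, hφ'c⟩ := exists_mem_Ioo_two_mul_deriv_eq hd1 ⟨hβ₀, hβ₁⟩ hβeq
  have hkβc : k ∈ Ioo β c :=
    mem_Ioo_of_strictAntiOn_of_strictMonoOn hanti hmono hβ₀.le hβc (by linarith) hφ'c
  have hsub : Icc (2 * β) 2 ⊆ Icc c 2 := Icc_subset_Icc hc2β.le le_rfl
  exact sub_le_sub_of_tangentGap hβ₀.le hβeq hΓ1 hΓ2 hf1 hf2
    (tangentGap_nonpos hd1 hanti hmono ⟨hβ₀.le, hβ₁.le⟩ hkβc hc2β.le hφ'c hβeq)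
    ((strictMonoOn_tangentGap_right hd1 hmono hk₀.le hkβc.2 hφ'c).monotoneOn.mono hsub)
    ((convexOn_tangentGap hd1 hd2 hconv hk₀.le).subset
      (hsub.trans (Icc_subset_Icc hkβc.2.le le_rfl)) (convex_Icc _ _))

theorem stmt16 (φ φ' φ'' : ℝ → ℝ)
    (hd1 : ∀ t ∈ Icc (0:ℝ) 2, HasDerivWithinAt φ (φ' t) (Icc 0 2) t)
    (hd2 : ∀ t ∈ Icc (0:ℝ) 2, HasDerivWithinAt φ' (φ'' t) (Icc 0 2) t)
    (hc : ContinuousOn φ'' (Icc (0:ℝ) 2))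
    (k : ℝ) (hk : k ∈ Ioo (0:ℝ) 2)
    (hconc : ∀ t ∈ Ico (0:ℝ) k, φ'' t < 0)
    (hconv : ∀ t ∈ Ioc k 2, 0 < φ'' t)
    (β : ℝ) (hβ : β ∈ Ioo (0:ℝ) 1)
    (hβeq : φ (2 * β) - φ β = β * φ' β)
    (Γ f : ℝ → ℝ)
    (hΓ1 : ∀ x, 0 ≤ x → x < β → Γ x = β - x)
    (hΓ2 : ∀ x, β ≤ x → x ≤ 1 → Γ x = x)
    (hf1 : ∀ x, 0 ≤ x → x < β → f x = x * φ' β)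
    (hf2 : ∀ x, β ≤ x → x ≤ 1 → f x = (1 / 2) * (φ (2 * x) - φ (2 * β)) + β * φ' β)
    : ∀ x ∈ Icc (0:ℝ) 1, ∀ ξ ∈ Icc (0:ℝ) 1,
      φ (ξ + Γ x) - φ (x + Γ x) ≤ f ξ - f x :=
  stmt16_general φ φ' φ'' hd1 hd2 k hk hconc hconv β hβ hβeq Γ f hΓ1 hΓ2 hf1 hf2
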